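/- Let Ω ⊂ ℝ be open bounded, q : ℝ × Ω̄ → ℝ be continuous with q(λ*, x̄) = 0 and q(λ, y) > 0 for λ > λ* and all y, where x̄ ∈ Ω. Assume y ↦ q(λ*, y) is C¹ with derivative vanishing at x̄ (so q(λ₁,y) = q(λ₁,x̄) + o(|y − x̄|) near x̄). Let m := min_{x,y ∈ Ω̄} κ(x,y) > 0 for a continuous strictly positive κ. Then for every ε > 0 there exist δ > 0 and λ₁ > λ* such that for all x ∈ Ω: ε · ∫_{B_δ(x̄)∩Ω} κ(x,y) q(λ₁,y)^{-1} dy > 1. -/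

import Mathlib

open MeasureTheory Metric Filter Topology Set

/-!
Since `q(λ*, ·)` vanishes to first order at `x̄`, on a small ball `B_δ(x̄) ⊆ Ω` we have
`|q(λ*, y)| ≤ c δ` for any prescribed `c > 0`; by joint continuity and compactness the bound
`q(λ₁, y) < 2 c δ` persists for some `λ₁ > λ*`. Then `κ q(λ₁, ·)⁻¹ ≥ m / (2 c δ)` on a ball of
length `2 δ`, so the integral is at least `m / c`, which beats `1 / ε` once `c = ε m / 2`.
-/

theorem HasDerivAt.exists_closedBall_subset_norm_sub_le {𝕜 F : Type*} [NontriviallyNormedField 𝕜]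
    [NormedAddCommGroup F] [NormedSpace 𝕜 F] {f : 𝕜 → F} {x : 𝕜} {U : Set 𝕜}
    (hf : HasDerivAt f 0 x) (hU : U ∈ 𝓝 x) {c : ℝ} (hc : 0 < c) :
    ∃ δ > 0, closedBall x δ ⊆ U ∧ ∀ y ∈ closedBall x δ, ‖f y - f x‖ ≤ c * δ := by
  have hlo := (hasDerivAt_iff_isLittleO.mp hf).def hc
  simp only [smul_zero, sub_zero] at hlo
  obtain ⟨r, hr, hrsub⟩ := Metric.mem_nhds_iff.mp (inter_mem hlo hU)
  refine ⟨r / 2, half_pos hr, fun y hy => (hrsub (closedBall_subset_ball (by linarith) hy)).2,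
    fun y hy => ?_⟩
  have hy' : ‖y - x‖ ≤ r / 2 := by rwa [← dist_eq_norm]
  calc ‖f y - f x‖ ≤ c * ‖y - x‖ := (hrsub (closedBall_subset_ball (by linarith) hy)).1
    _ ≤ c * (r / 2) := by gcongr

theorem IsCompact.exists_gt_forall_lt {X : Type*} [TopologicalSpace X] {K : Set X}
    (hK : IsCompact K) {q : ℝ → X → ℝ} (hq : Continuous fun z : ℝ × X => q z.1 z.2)
    {a M : ℝ} (h : ∀ y ∈ K, q a y < M) : ∃ b > a, ∀ y ∈ K, q b y < M := by
  have hev : ∀ᶠ b in 𝓝 a, ∀ y ∈ K, q b y < M :=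
    hK.eventually_forall_of_forall_eventually fun y hy =>
      (isOpen_lt hq continuous_const).mem_nhds (h y hy)
  obtain ⟨b, hb, hba⟩ := ((hev.filter_mono nhdsWithin_le_nhds).and
    (self_mem_nhdsWithin : Ioi a ∈ 𝓝[>] a)).exists
  exact ⟨b, hba, hb⟩

theorem mul_div_le_setIntegral_ball_mul_inv {f g : ℝ → ℝ} {a δ m M : ℝ} (hδ : 0 ≤ δ) (hm : 0 ≤ m)
    (hf : ContinuousOn f (closedBall a δ)) (hg : ContinuousOn g (closedBall a δ))
    (hg₀ : ∀ y ∈ closedBall a δ, 0 < g y) (hgM : ∀ y ∈ ball a δ, g y ≤ M)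
    (hfm : ∀ y ∈ ball a δ, m ≤ f y) :
    m / M * (2 * δ) ≤ ∫ y in ball a δ, f y * (g y)⁻¹ := by
  have hint : IntegrableOn (fun y => f y * (g y)⁻¹) (ball a δ) :=
    ((hf.mul (hg.inv₀ fun y hy => (hg₀ y hy).ne')).integrableOn_compact
      (isCompact_closedBall a δ)).mono_set ball_subset_closedBall
  have hlow : ∀ y ∈ ball a δ, m / M ≤ f y * (g y)⁻¹ := fun y hy => by
    have hgy := hg₀ y (ball_subset_closedBall hy)
    rw [← div_eq_mul_inv]
    exact div_le_div₀ (hm.trans (hfm y hy)) (hfm y hy) hgy (hgM y hy)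
  have hge := setIntegral_ge_of_const_le_real measurableSet_ball measure_ball_lt_top.ne hlow hint
  rwa [measureReal_def, Real.volume_ball, ENNReal.toReal_ofReal (by positivity)] at hge

theorem stmt14_general (Ω : Set ℝ) (hΩo : IsOpen Ω)
    (xbar lamstar : ℝ) (hx : xbar ∈ Ω)
    (q : ℝ → ℝ → ℝ) (hq : Continuous (fun z : ℝ × ℝ => q z.1 z.2))
    (hq0 : q lamstar xbar = 0)
    (hqpos : ∀ lam > lamstar, ∀ y ∈ closure Ω, 0 < q lam y)
    (hderiv : HasDerivAt (fun y => q lamstar y) 0 xbar)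
    (κ : ℝ → ℝ → ℝ) (hκc : Continuous (fun z : ℝ × ℝ => κ z.1 z.2))
    (m : ℝ) (hm : 0 < m)
    (hκm : ∀ x ∈ closure Ω, ∀ y ∈ closure Ω, m ≤ κ x y) :
    ∀ ε > (0 : ℝ), ∃ δ > (0 : ℝ), ∃ lam₁ > lamstar,
      ∀ x ∈ Ω, 1 < ε * ∫ y in Metric.ball xbar δ ∩ Ω, κ x y * (q lam₁ y)⁻¹ := by
  intro ε hε
  have hc : 0 < ε * m / 2 := by positivity
  obtain ⟨δ, hδ, hδΩ, hsmall⟩ :=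
    hderiv.exists_closedBall_subset_norm_sub_le (hΩo.mem_nhds hx) hc
  obtain ⟨lam₁, hlam₁, hlt⟩ := (isCompact_closedBall xbar δ).exists_gt_forall_lt hq
    (M := ε * m * δ) fun y hy => by
      have := (le_abs_self _).trans (hsmall y hy)
      rw [hq0, sub_zero] at this
      nlinarith
  refine ⟨δ, hδ, lam₁, hlam₁, fun x hxΩ => ?_⟩
  have hΩ : ∀ y ∈ closedBall xbar δ, y ∈ closure Ω := fun y hy => subset_closure (hδΩ hy)
  have hbound := mul_div_le_setIntegral_ball_mul_inv hδ.le hm.le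
    (hκc.comp (continuous_const.prodMk continuous_id)).continuousOn
    (hq.comp (continuous_const.prodMk continuous_id)).continuousOn
    (fun y hy => hqpos lam₁ hlam₁ y (hΩ y hy))
    (fun y hy => (hlt y (ball_subset_closedBall hy)).le)
    (fun y hy => hκm x (subset_closure hxΩ) y (hΩ y (ball_subset_closedBall hy)))
  rw [inter_eq_left.mpr (ball_subset_closedBall.trans hδΩ)]
  have hval : m / (ε * m * δ) * (2 * δ) = 2 / ε := by field_simp
  rw [hval] at hbound
  calc (1 : ℝ) < ε * (2 / ε) := by rw [mul_div_cancel₀ _ hε.ne']; norm_num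
    _ ≤ _ := mul_le_mul_of_nonneg_left hbound hε.le

/-- core estimate of Proposition 4.2: if `q(λ*,x̄) = 0` with vanishing
`y`-derivative at `x̄`, `q(λ,·) > 0` for `λ > λ*`, and `κ ≥ m > 0`, then for every
`ε > 0` there are `δ > 0` and `λ₁ > λ*` with
`ε ∫_{B_δ(x̄) ∩ Ω} κ(x,y) q(λ₁,y)⁻¹ dy > 1` for all `x ∈ Ω`. -/
theorem stmt14 (Ω : Set ℝ) (hΩo : IsOpen Ω) (hΩb : Bornology.IsBounded Ω)
    (xbar lamstar : ℝ) (hx : xbar ∈ Ω)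
    (q : ℝ → ℝ → ℝ) (hq : Continuous (fun z : ℝ × ℝ => q z.1 z.2))
    (hq0 : q lamstar xbar = 0)
    (hqpos : ∀ lam > lamstar, ∀ y ∈ closure Ω, 0 < q lam y)
    (hderiv : HasDerivAt (fun y => q lamstar y) 0 xbar)
    (κ : ℝ → ℝ → ℝ) (hκc : Continuous (fun z : ℝ × ℝ => κ z.1 z.2))
    (m : ℝ) (hm : 0 < m)
    (hκm : ∀ x ∈ closure Ω, ∀ y ∈ closure Ω, m ≤ κ x y) :
    ∀ ε > (0 : ℝ), ∃ δ > (0 : ℝ), ∃ lam₁ > lamstar,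
      ∀ x ∈ Ω, 1 < ε * ∫ y in Metric.ball xbar δ ∩ Ω, κ x y * (q lam₁ y)⁻¹ :=
  stmt14_general Ω hΩo xbar lamstar hx q hq hq0 hqpos hderiv κ hκc m hm hκm
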